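/- arXiv:1008.1638 — 2 statements merged into one kernel-verified Lean document; each statement's English description precedes it below -/
import Mathlib

section
/- For every real y, the series ∑_{n∈ℤ} sin²(y)/(y-πn)² equals 1. -/
open Real

private theorem keynorm (b : ℝ) :
    ‖(1/(2*π) : ℝ) • ((Complex.exp (Complex.I*b*(2*π)) - Complex.exp (Complex.I*b*0))/(Complex.I*b))‖^2
      = Real.sin (π * b)^2 / (π*b)^2 := by
  rcases eq_or_ne b 0 with rfl | hb
  · simp
  have hπ : (π:ℝ) ≠ 0 := Real.pi_ne_zero
  have h1 : Complex.exp (Complex.I*b*(2*π)) - Complex.exp (Complex.I*b*0) =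
      Complex.exp ((2*π*b:ℝ) * Complex.I) - 1 := by
    rw [mul_zero, Complex.exp_zero]
    push_cast
    ring_nf
  rw [h1, norm_smul]
  have h2 : ‖Complex.exp ((2*π*b:ℝ) * Complex.I) - 1‖^2 = 4 * Real.sin (π*b)^2 := by
    rw [Complex.sq_norm, Complex.normSq_apply, Complex.sub_re, Complex.sub_im,
      Complex.exp_ofReal_mul_I_re, Complex.exp_ofReal_mul_I_im]
    have h : (2:ℝ)*π*b = 2*(π*b) := by ring
    rw [h, Real.cos_two_mul', Real.sin_two_mul]
    simp only [Complex.one_re, Complex.one_im]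
    nlinarith [Real.sin_sq_add_cos_sq (π*b)]
  have h3 : ‖Complex.I*(b:ℂ)‖ = |b| := by simp
  have h4 : ‖(1/(2*π):ℝ)‖ = 1/(2*π) := by
    rw [Real.norm_eq_abs, abs_of_pos]; positivity
  rw [h4, norm_div, h3, mul_pow, div_pow, div_pow, h2, _root_.sq_abs b]
  field_simp
  ring

private theorem sin_sq_sub_int_mul_pi (y : ℝ) (n : ℤ) :
    Real.sin (y - π * n) ^ 2 = Real.sin y ^ 2 := by
  rw [Real.sin_sub]
  have h0 : Real.sin (π * n) = 0 := by
    rw [mul_comm]; exact Real.sin_int_mul_pi n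
  have h1 : Real.cos (π * n) ^ 2 = 1 := by
    have := Real.sin_sq_add_cos_sq (π * n)
    rw [h0] at this; nlinarith
  rw [h0, mul_zero, sub_zero, mul_pow, h1, mul_one]

open MeasureTheory Complex AddCircle in
/-- For every real `y`, `∑_{n ∈ ℤ} sin² y / (y - πn)² = 1`, where at points `y = πn` the
summand is interpreted as its limiting value (namely `1`). -/
theorem stmt_1 (y : ℝ) :
    ∑' n : ℤ, (if y = π * n then (1 : ℝ) else Real.sin y ^ 2 / (y - π * n) ^ 2) = 1 := by
  have hπ : (π:ℝ) ≠ 0 := Real.pi_ne_zero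
  have h2π : (0:ℝ) < 2 * π := by positivity
  haveI : Fact ((0:ℝ) < 2 * π) := ⟨h2π⟩
  set a : ℝ := y / π with ha
  set g : ℝ → ℂ := fun t => Complex.exp (Complex.I * a * t) with hg
  set F : AddCircle (2*π) → ℂ := AddCircle.liftIoc (2*π) 0 g with hF
  have hgc : Continuous g := by fun_prop
  have hmeas : Measurable F := by
    have : F = (fun x : Set.Ioc (0:ℝ) (0+2*π) => g x) ∘ (AddCircle.measurableEquivIoc (2*π) 0) := rfl
    rw [this]
    exact (hgc.comp continuous_subtype_val).measurable.comp
      (AddCircle.measurableEquivIoc (2*π) 0).measurable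
  have hFnorm : ∀ x, ‖F x‖ = 1 := by
    intro x
    simp [hF, AddCircle.liftIoc, hg, Complex.norm_exp]
  have hF2 : MemLp F 2 (haarAddCircle) :=
    (memLp_top_of_bound hmeas.aestronglyMeasurable 1
      (ae_of_all _ fun x => (hFnorm x).le)).mono_exponent le_top
  set f : Lp ℂ 2 (haarAddCircle (T := 2*π)) := hF2.toLp F with hf
  have hae : ⇑f =ᵐ[haarAddCircle] F := hF2.coeFn_toLp
  have hcoeff : ∀ n : ℤ, fourierCoeff (⇑f) n = fourierCoeff F n := by
    intro n
    exact integral_congr_ae (hae.mono fun x hx => by simp only []; rw [hx])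
  -- compute the Fourier coefficients of F
  have hFc : ∀ n : ℤ, fourierCoeff F n
      = (1/(2*π) : ℝ) • ∫ x in (0:ℝ)..(2*π), Complex.exp (Complex.I * ((a - n : ℝ)) * x) := by
    intro n
    rw [hF, fourierCoeff_liftIoc_eq, fourierCoeffOn_eq_integral]
    have hT : (0:ℝ) + 2*π - 0 = 2*π := by ring
    congr 1
    · rw [hT]
    · rw [intervalIntegral.integral_congr (g := fun x => Complex.exp (Complex.I * ((a - n : ℝ)) * x)) ?_]
      · congr 1
        ring
      intro x hx
      simp only [smul_eq_mul, hg]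
      rw [fourier_coe_apply, ← Complex.exp_add]
      congr 1
      have hπC : ((π:ℝ):ℂ) ≠ 0 := Complex.ofReal_ne_zero.mpr hπ
      have haC : ((a:ℝ):ℂ) = (y:ℂ) / (π:ℂ) := by
        rw [ha]; push_cast; ring
      push_cast
      field_simp
      ring
  -- the summand identity
  have hsummand : ∀ n : ℤ, ‖fourierCoeff F n‖^2
      = (if y = π * n then (1 : ℝ) else Real.sin y ^ 2 / (y - π * n) ^ 2) := by
    intro n
    rw [hFc n]
    set b : ℝ := a - n with hb
    have hyb : y - π * n = π * b := by
      rw [hb, ha]; field_simp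
    by_cases hy : y = π * n
    · have hb0 : b = 0 := by
        rw [hb, ha, hy]
        field_simp
        ring
      rw [if_pos hy, hb0]
      have hi : (∫ x in (0:ℝ)..(2*π), Complex.exp (Complex.I * ((0:ℝ)) * x)) = ((2*π:ℝ):ℂ) := by
        simp
      rw [hi, norm_smul, Real.norm_eq_abs, abs_of_pos (by positivity : (0:ℝ) < 1/(2*π))]
      rw [Complex.norm_real, Real.norm_eq_abs, abs_of_pos h2π]
      field_simp
    · have hb0 : b ≠ 0 := by
        intro h
        apply hy
        have : y - π * n = 0 := by rw [hyb, h, mul_zero]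
        linarith
      rw [if_neg hy]
      have hint : (∫ x in (0:ℝ)..(2*π), Complex.exp (Complex.I * (b:ℝ) * x))
          = (Complex.exp (Complex.I*b*(2*π)) - Complex.exp (Complex.I*b*0))/(Complex.I*b) := by
        have hc : (Complex.I * (b:ℂ)) ≠ 0 := by
          simp [Complex.I_ne_zero, hb0]
        have := integral_exp_mul_complex (a := (0:ℝ)) (b := (2*π:ℝ)) hc
        simp_rw [mul_assoc] at this ⊢
        rw [this]
        push_cast
        ring_nf
      rw [hint, keynorm b, ← hyb, sin_sq_sub_int_mul_pi y n]
  calc ∑' n : ℤ, (if y = π * n then (1 : ℝ) else Real.sin y ^ 2 / (y - π * n) ^ 2)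
      = ∑' n : ℤ, ‖fourierCoeff (⇑f) n‖^2 := by
        refine tsum_congr fun n => ?_
        rw [hcoeff n, hsummand n]
    _ = ∫ t : AddCircle (2*π), ‖f t‖ ^ 2 ∂haarAddCircle := tsum_sq_fourierCoeff f
    _ = 1 := by
        rw [integral_congr_ae (hae.mono fun x hx => by rw [hx, hFnorm x])]
        simp
end

section
/- Let H be a Hilbert space and let Φ(z₁,z₂) = ∑_{n} φ_n(z₁) ψ_n(z₂) where (φ_n), (ψ_n) are bounded measurable functions with sup_{z₁} ∑_n |φ_n(z₁)|² ≤ A² and sup_{z₂} ∑_n |ψ_n(z₂)|² ≤ B². Then for spectral measures E₁, E₂ and any bounded operator T, the operator ∑_n E₁(φ_n) T E₂(ψ_n) (where E(φ) = ∫ φ dE) converges and has norm at most A·B·‖T‖. -/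
private lemma aux_sum_sq {X H : Type*} [NormedAddCommGroup H] [InnerProductSpace ℂ H]
    [CompleteSpace H]
    (E : (X → ℂ) →⋆ₐ[ℂ] (H →L[ℂ] H))
    (hE : ∀ (φ : X → ℂ) (c : ℝ), (∀ x, ‖φ x‖ ≤ c) → ‖E φ‖ ≤ c)
    (C : ℝ) (f : ℕ → X → ℂ)
    (hfs : ∀ x, Summable fun n => ‖f n x‖ ^ 2)
    (hf : ∀ x, ∑' n : ℕ, ‖f n x‖ ^ 2 ≤ C ^ 2)
    (t : Finset ℕ) (v : H) :
    ∑ n ∈ t, ‖E (f n) v‖ ^ 2 ≤ C ^ 2 * ‖v‖ ^ 2 := by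
  have h1 : ∀ n, ‖E (f n) v‖ ^ 2 = Complex.re (inner ℂ ((star (E (f n)) * E (f n)) v) v : ℂ) := by
    intro n
    rw [ContinuousLinearMap.mul_apply, ContinuousLinearMap.star_eq_adjoint,
      ContinuousLinearMap.adjoint_inner_left]
    exact (inner_self_eq_norm_sq (𝕜 := ℂ) _).symm
  have h2 : ∀ n, star (E (f n)) * E (f n) = E (star (f n) * f n) := by
    intro n; rw [map_mul, map_star]
  set g : X → ℂ := ∑ n ∈ t, star (f n) * f n with hg
  have hsum : ∑ n ∈ t, ‖E (f n) v‖ ^ 2 = Complex.re (inner ℂ (E g v) v : ℂ) := by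
    simp only [h1, h2, hg, map_sum, ContinuousLinearMap.sum_apply, sum_inner, Complex.re_sum]
  have hgle : ∀ x, ‖g x‖ ≤ C ^ 2 := by
    intro x
    have : g x = ∑ n ∈ t, (starRingEnd ℂ) (f n x) * f n x := by
      simp [hg, Finset.sum_apply, Pi.star_apply]
    rw [this]
    calc ‖∑ n ∈ t, (starRingEnd ℂ) (f n x) * f n x‖
        ≤ ∑ n ∈ t, ‖(starRingEnd ℂ) (f n x) * f n x‖ := norm_sum_le _ _
      _ = ∑ n ∈ t, ‖f n x‖ ^ 2 := by
          refine Finset.sum_congr rfl fun n _ => ?_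
          rw [norm_mul, RingHomIsometric.norm_map]; ring
      _ ≤ ∑' n : ℕ, ‖f n x‖ ^ 2 := Summable.sum_le_tsum t (fun n _ => by positivity) (hfs x)
      _ ≤ C ^ 2 := hf x
  calc ∑ n ∈ t, ‖E (f n) v‖ ^ 2 = Complex.re (inner ℂ (E g v) v : ℂ) := hsum
    _ ≤ ‖(inner ℂ (E g v) v : ℂ)‖ := Complex.re_le_norm _
    _ ≤ ‖E g v‖ * ‖v‖ := norm_inner_le_norm _ _
    _ ≤ (C ^ 2 * ‖v‖) * ‖v‖ := by
        have := (E g).le_opNorm v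
        have h3 : ‖E g v‖ ≤ C ^ 2 * ‖v‖ :=
          le_trans this (mul_le_mul_of_nonneg_right (hE g _ hgle) (norm_nonneg v))
        exact mul_le_mul_of_nonneg_right h3 (norm_nonneg v)
    _ = C ^ 2 * ‖v‖ ^ 2 := by ring

private lemma aux_bound {X Y H : Type*} [NormedAddCommGroup H] [InnerProductSpace ℂ H]
    [CompleteSpace H]
    (E₁ : (X → ℂ) →⋆ₐ[ℂ] (H →L[ℂ] H)) (E₂ : (Y → ℂ) →⋆ₐ[ℂ] (H →L[ℂ] H))
    (hE₁ : ∀ (φ : X → ℂ) (c : ℝ), (∀ x, ‖φ x‖ ≤ c) → ‖E₁ φ‖ ≤ c)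
    (A : ℝ) (hA : 0 ≤ A)
    (φ : ℕ → X → ℂ) (ψ : ℕ → Y → ℂ)
    (hφs : ∀ x, Summable fun n => ‖φ n x‖ ^ 2)
    (hφ : ∀ x, ∑' n : ℕ, ‖φ n x‖ ^ 2 ≤ A ^ 2)
    (T : H →L[ℂ] H) (t : Finset ℕ) (v : H) :
    ‖∑ n ∈ t, E₁ (φ n) (T (E₂ (ψ n) v))‖ ≤
      A * ‖T‖ * Real.sqrt (∑ n ∈ t, ‖E₂ (ψ n) v‖ ^ 2) := by
  set u := ∑ n ∈ t, E₁ (φ n) (T (E₂ (ψ n) v)) with hu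
  rcases eq_or_lt_of_le (norm_nonneg u) with h0 | h0
  · rw [← h0]; positivity
  have e1 : (inner ℂ u u : ℂ) = ∑ n ∈ t, inner ℂ (T (E₂ (ψ n) v)) (E₁ (star (φ n)) u) := by
    conv_lhs => rw [hu]
    rw [sum_inner]
    refine Finset.sum_congr rfl fun n _ => ?_
    have h : E₁ (star (φ n)) = ContinuousLinearMap.adjoint (E₁ (φ n)) := by
      rw [map_star, ContinuousLinearMap.star_eq_adjoint]
    rw [h, ContinuousLinearMap.adjoint_inner_right]
  have e2 : ‖u‖ ^ 2 ≤ ∑ n ∈ t, ‖T (E₂ (ψ n) v)‖ * ‖E₁ (star (φ n)) u‖ := by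
    have h : ‖u‖ ^ 2 = Complex.re (inner ℂ u u : ℂ) := (inner_self_eq_norm_sq (𝕜 := ℂ) u).symm
    rw [h, e1, Complex.re_sum]
    refine Finset.sum_le_sum fun n _ => ?_
    have h2 := norm_inner_le_norm (𝕜 := ℂ) (T (E₂ (ψ n) v)) (E₁ (star (φ n)) u)
    exact le_trans (Complex.re_le_norm _) h2
  have hsq : ‖u‖ * ‖u‖ ≤ (A * ‖T‖ * Real.sqrt (∑ n ∈ t, ‖E₂ (ψ n) v‖ ^ 2)) * ‖u‖ := by
    rw [← sq]
    calc ‖u‖ ^ 2 ≤ ∑ n ∈ t, ‖T (E₂ (ψ n) v)‖ * ‖E₁ (star (φ n)) u‖ := e2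
      _ ≤ ∑ n ∈ t, (‖T‖ * ‖E₂ (ψ n) v‖) * ‖E₁ (star (φ n)) u‖ :=
          Finset.sum_le_sum fun n _ =>
            mul_le_mul_of_nonneg_right (T.le_opNorm _) (norm_nonneg _)
      _ = ‖T‖ * ∑ n ∈ t, ‖E₂ (ψ n) v‖ * ‖E₁ (star (φ n)) u‖ := by
          rw [Finset.mul_sum]; exact Finset.sum_congr rfl fun n _ => by ring
      _ ≤ ‖T‖ * (Real.sqrt (∑ n ∈ t, ‖E₂ (ψ n) v‖ ^ 2) *
            Real.sqrt (∑ n ∈ t, ‖E₁ (star (φ n)) u‖ ^ 2)) :=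
          mul_le_mul_of_nonneg_left (Real.sum_mul_le_sqrt_mul_sqrt t _ _) (norm_nonneg T)
      _ ≤ ‖T‖ * (Real.sqrt (∑ n ∈ t, ‖E₂ (ψ n) v‖ ^ 2) * (A * ‖u‖)) := by
          refine mul_le_mul_of_nonneg_left
            (mul_le_mul_of_nonneg_left ?_ (Real.sqrt_nonneg _)) (norm_nonneg T)
          have h := aux_sum_sq E₁ hE₁ A (fun n => star (φ n))
            (fun x => by simpa using hφs x) (fun x => by simpa using hφ x) t u
          calc Real.sqrt (∑ n ∈ t, ‖E₁ (star (φ n)) u‖ ^ 2)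
              ≤ Real.sqrt (A ^ 2 * ‖u‖ ^ 2) := Real.sqrt_le_sqrt h
            _ = A * ‖u‖ := by
                rw [show A ^ 2 * ‖u‖ ^ 2 = (A * ‖u‖) ^ 2 by ring,
                  Real.sqrt_sq (by positivity)]
      _ = (A * ‖T‖ * Real.sqrt (∑ n ∈ t, ‖E₂ (ψ n) v‖ ^ 2)) * ‖u‖ := by ring
  exact le_of_mul_le_mul_right hsq h0


/-- Haagerup-type Schur multiplier bound: if `Φ(z₁,z₂) = ∑ φ_n(z₁) ψ_n(z₂)` with
`sup_x ∑ |φ_n x|² ≤ A²` and `sup_y ∑ |ψ_n y|² ≤ B²`, then for functional calculi `E₁, E₂`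
of spectral measures (encoded as contractive star-algebra homomorphisms on bounded
functions) and any bounded operator `T`, the series `∑ E₁(φ_n) T E₂(ψ_n)` converges
(strongly) to an operator of norm at most `A·B·‖T‖`. -/
theorem stmt_10 {X Y H : Type*} [NormedAddCommGroup H] [InnerProductSpace ℂ H]
    [CompleteSpace H]
    (E₁ : (X → ℂ) →⋆ₐ[ℂ] (H →L[ℂ] H)) (E₂ : (Y → ℂ) →⋆ₐ[ℂ] (H →L[ℂ] H))
    (hE₁ : ∀ (φ : X → ℂ) (c : ℝ), (∀ x, ‖φ x‖ ≤ c) → ‖E₁ φ‖ ≤ c)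
    (hE₂ : ∀ (ψ : Y → ℂ) (c : ℝ), (∀ y, ‖ψ y‖ ≤ c) → ‖E₂ ψ‖ ≤ c)
    (A B : ℝ) (hA : 0 ≤ A) (hB : 0 ≤ B)
    (φ : ℕ → X → ℂ) (ψ : ℕ → Y → ℂ)
    (hφs : ∀ x, Summable fun n => ‖φ n x‖ ^ 2)
    (hφ : ∀ x, ∑' n : ℕ, ‖φ n x‖ ^ 2 ≤ A ^ 2)
    (hψs : ∀ y, Summable fun n => ‖ψ n y‖ ^ 2)
    (hψ : ∀ y, ∑' n : ℕ, ‖ψ n y‖ ^ 2 ≤ B ^ 2)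
    (T : H →L[ℂ] H) :
    ∃ S : H →L[ℂ] H,
      (∀ v : H, HasSum (fun n : ℕ => E₁ (φ n) (T (E₂ (ψ n) v))) (S v)) ∧
      ‖S‖ ≤ A * B * ‖T‖ := by

  classical
  have hC0 : 0 ≤ A * ‖T‖ := mul_nonneg hA (norm_nonneg T)
  have hgsum : ∀ v : H, Summable (fun n => ‖E₂ (ψ n) v‖ ^ 2) := fun v =>
    summable_of_sum_le (fun n => by positivity)
      (fun s => aux_sum_sq E₂ hE₂ B ψ hψs hψ s v)
  have key : ∀ (v : H) (t : Finset ℕ),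
      ‖∑ n ∈ t, E₁ (φ n) (T (E₂ (ψ n) v))‖ ≤
        A * ‖T‖ * Real.sqrt (∑ n ∈ t, ‖E₂ (ψ n) v‖ ^ 2) :=
    fun v t => aux_bound E₁ E₂ hE₁ A hA φ ψ hφs hφ T t v
  have hsummable : ∀ v : H, Summable (fun n => E₁ (φ n) (T (E₂ (ψ n) v))) := by
    intro v
    rw [summable_iff_vanishing]
    intro e he
    obtain ⟨ε, hε, hball⟩ := Metric.mem_nhds_iff.mp he
    have hδ : (0:ℝ) < (ε / (A * ‖T‖ + 1)) ^ 2 := by positivity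
    obtain ⟨s, hs⟩ := (hgsum v).vanishing (Metric.ball_mem_nhds 0 hδ)
    refine ⟨s, fun t ht => hball ?_⟩
    have h1 := hs t ht
    rw [Metric.mem_ball, dist_zero_right] at h1 ⊢
    have hnn : (0:ℝ) ≤ ∑ n ∈ t, ‖E₂ (ψ n) v‖ ^ 2 :=
      Finset.sum_nonneg fun n _ => by positivity
    have h2 : ∑ n ∈ t, ‖E₂ (ψ n) v‖ ^ 2 < (ε / (A * ‖T‖ + 1)) ^ 2 := by
      rwa [Real.norm_eq_abs, abs_of_nonneg hnn] at h1
    calc ‖∑ n ∈ t, E₁ (φ n) (T (E₂ (ψ n) v))‖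
        ≤ A * ‖T‖ * Real.sqrt (∑ n ∈ t, ‖E₂ (ψ n) v‖ ^ 2) := key v t
      _ ≤ A * ‖T‖ * (ε / (A * ‖T‖ + 1)) := by
          refine mul_le_mul_of_nonneg_left ?_ hC0
          have h3 := Real.sqrt_le_sqrt h2.le
          rwa [Real.sqrt_sq (by positivity)] at h3
      _ < (A * ‖T‖ + 1) * (ε / (A * ‖T‖ + 1)) :=
          mul_lt_mul_of_pos_right (lt_add_one _) (by positivity)
      _ = ε := by field_simp
  have hnorm : ∀ v : H, ‖∑' n : ℕ, E₁ (φ n) (T (E₂ (ψ n) v))‖ ≤ A * ‖T‖ * (B * ‖v‖) := by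
    intro v
    have hS : HasSum (fun n => E₁ (φ n) (T (E₂ (ψ n) v)))
        (∑' n : ℕ, E₁ (φ n) (T (E₂ (ψ n) v))) := (hsummable v).hasSum
    refine le_of_tendsto' (Filter.Tendsto.norm hS) fun t => ?_
    calc ‖∑ n ∈ t, E₁ (φ n) (T (E₂ (ψ n) v))‖
        ≤ A * ‖T‖ * Real.sqrt (∑ n ∈ t, ‖E₂ (ψ n) v‖ ^ 2) := key v t
      _ ≤ A * ‖T‖ * (B * ‖v‖) := by
          refine mul_le_mul_of_nonneg_left ?_ hC0
          have h1 : ∑ n ∈ t, ‖E₂ (ψ n) v‖ ^ 2 ≤ B ^ 2 * ‖v‖ ^ 2 :=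
            aux_sum_sq E₂ hE₂ B ψ hψs hψ t v
          have h2 := Real.sqrt_le_sqrt h1
          rwa [show B ^ 2 * ‖v‖ ^ 2 = (B * ‖v‖) ^ 2 by ring,
            Real.sqrt_sq (by positivity)] at h2
  let S₀ : H →ₗ[ℂ] H :=
    { toFun := fun v => ∑' n : ℕ, E₁ (φ n) (T (E₂ (ψ n) v))
      map_add' := fun v w => by
        have h : (fun n => E₁ (φ n) (T (E₂ (ψ n) (v + w)))) =
            fun n => E₁ (φ n) (T (E₂ (ψ n) v)) + E₁ (φ n) (T (E₂ (ψ n) w)) := by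
          funext n; simp [map_add]
        simp only [h]
        exact Summable.tsum_add (hsummable v) (hsummable w)
      map_smul' := fun c v => by
        have h : (fun n => E₁ (φ n) (T (E₂ (ψ n) (c • v)))) =
            fun n => c • E₁ (φ n) (T (E₂ (ψ n) v)) := by
          funext n; simp [map_smul]
        simp only [h, RingHom.id_apply]
        exact ((hsummable v).hasSum.const_smul c).tsum_eq }
  refine ⟨S₀.mkContinuous (A * B * ‖T‖) (fun v => ?_), fun v => ?_, ?_⟩
  · calc ‖S₀ v‖ ≤ A * ‖T‖ * (B * ‖v‖) := hnorm v
      _ = A * B * ‖T‖ * ‖v‖ := by ring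
  · exact (hsummable v).hasSum
  · exact S₀.mkContinuous_norm_le (by positivity) _
end
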